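/- Let Φ(x,y) = (L_{n-1}^ν(x) L_n^ν(y) - L_{n-1}^ν(y) L_n^ν(x))/(x-y). Then (x ∂/∂x + y ∂/∂y + 1) Φ(x,y) = (1/2)[L_{n-1}^ν(x) L_n^ν(y) + L_{n-1}^ν(y) L_n^ν(x)] for all x ≠ y in (0,∞). -/

import Mathlib

/-!
With `u = L_{n-1}^ν`, `v = L_n^ν`, `b = √(n(n+ν))` and `c = ν/2 + n`, the differentiation system
reads `x u' = (x/2 - c) u + b v`, `x v' = -b u - (x/2 - c) v`. Applied to the numerator
`N(x,y) = u(x)v(y) - u(y)v(x)` of `Φ`, the Euler operator `x∂ₓ + y∂_y` cancels every term with `b`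
or `c` and leaves `(x - y)/2 · (u(x)v(y) + u(y)v(x))`, while on `1/(x - y)` it acts as `-1`,
which the `+ 1` compensates.

The system itself comes from the relations `x ℓ_n' = n ℓ_n - (n+ν) ℓ_{n-1}` and
`ℓ_n' = ℓ_{n-1}' - ℓ_{n-1}` between the Laguerre polynomials, read off coefficientwise, together
with the ratio `√(n/(n+ν))` of consecutive normalizing constants.
-/

/-- The generalized Laguerre polynomial `ℓ_n^ν(x) = ∑_{k≤n} (-1)^k Γ(n+ν+1)
/ (Γ(k+ν+1)(n-k)!k!) x^k`. -/
noncomputable def laguerrePoly (n : ℕ) (ν : ℝ) (x : ℝ) : ℝ :=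
  ∑ k ∈ Finset.range (n + 1),
    (-1) ^ k * Real.Gamma ((n : ℝ) + ν + 1) /
      (Real.Gamma ((k : ℝ) + ν + 1) * (Nat.factorial (n - k)) * (Nat.factorial k)) * x ^ k

/-- The orthonormal Laguerre function
`L_n^ν(x) = (Γ(n+1)/Γ(n+ν+1))^{1/2} ℓ_n^ν(x) x^{ν/2} e^{-x/2}`. -/
noncomputable def laguerreFun (n : ℕ) (ν : ℝ) (x : ℝ) : ℝ :=
  Real.sqrt (Real.Gamma ((n : ℝ) + 1) / Real.Gamma ((n : ℝ) + ν + 1)) *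
    laguerrePoly n ν x * x ^ (ν / 2) * Real.exp (-x / 2)

open Real Finset
open scoped Nat

noncomputable def laguerreCoeff (n : ℕ) (ν : ℝ) (k : ℕ) : ℝ :=
  (-1) ^ k * Gamma ((n : ℝ) + ν + 1) / (Gamma ((k : ℝ) + ν + 1) * (n - k)! * k !)

lemma laguerrePoly_eq_sum (n : ℕ) (ν x : ℝ) :
    laguerrePoly n ν x = ∑ k ∈ range (n + 1), laguerreCoeff n ν k * x ^ k := rfl

section Coefficients

variable {ν : ℝ} (hν : -1 < ν)
include hν

lemma natCast_add_add_one_pos (k : ℕ) : 0 < (k : ℝ) + ν + 1 := by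
  have := k.cast_nonneg (α := ℝ); linarith

lemma Gamma_natCast_succ_add (m : ℕ) :
    Gamma (((m + 1 : ℕ) : ℝ) + ν + 1) = ((m : ℝ) + ν + 1) * Gamma ((m : ℝ) + ν + 1) := by
  rw [← Gamma_add_one (natCast_add_add_one_pos hν m).ne']
  push_cast; ring_nf

lemma laguerreCoeff_succ_of_le {m k : ℕ} (hk : k ≤ m) :
    ((m : ℝ) + 1 - k) * laguerreCoeff (m + 1) ν k = ((m : ℝ) + 1 + ν) * laguerreCoeff m ν k := by
  obtain ⟨d, rfl⟩ := Nat.exists_eq_add_of_le hk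
  have hΓ := (Gamma_pos_of_pos (natCast_add_add_one_pos hν k)).ne'
  rw [laguerreCoeff, laguerreCoeff, Gamma_natCast_succ_add hν, show k + d + 1 - k = d + 1 by omega,
    Nat.add_sub_cancel_left, Nat.factorial_succ]
  push_cast
  field_simp
  ring

lemma laguerreCoeff_succ_succ {m j : ℕ} (hj : j < m) :
    ((j : ℝ) + 1) * laguerreCoeff (m + 1) ν (j + 1)
      = ((j : ℝ) + 1) * laguerreCoeff m ν (j + 1) - laguerreCoeff m ν j := by
  obtain ⟨d, rfl⟩ := Nat.exists_eq_add_of_lt hj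
  have hj₀ := (natCast_add_add_one_pos hν j).ne'
  have hΓ := (Gamma_pos_of_pos (natCast_add_add_one_pos hν j)).ne'
  rw [laguerreCoeff, laguerreCoeff, laguerreCoeff, Gamma_natCast_succ_add hν,
    Gamma_natCast_succ_add hν, Gamma_natCast_succ_add hν j,
    show j + d + 1 + 1 - (j + 1) = d + 1 by omega, show j + d + 1 - (j + 1) = d by omega,
    show j + d + 1 - j = d + 1 by omega,
    Nat.factorial_succ, Nat.factorial_succ j]
  push_cast
  field_simp
  ring

lemma laguerreCoeff_succ_self (m : ℕ) :
    ((m : ℝ) + 1) * laguerreCoeff (m + 1) ν (m + 1) = -laguerreCoeff m ν m := by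
  have hΓ := (Gamma_pos_of_pos (natCast_add_add_one_pos hν m)).ne'
  have hΓ' := (Gamma_pos_of_pos (natCast_add_add_one_pos hν (m + 1))).ne'
  rw [laguerreCoeff, laguerreCoeff, Nat.sub_self, Nat.sub_self, Nat.factorial_succ]
  push_cast at hΓ' ⊢
  field_simp
  ring

end Coefficients

noncomputable def laguerrePolyDeriv (n : ℕ) (ν x : ℝ) : ℝ :=
  ∑ k ∈ range (n + 1), laguerreCoeff n ν k * (k * x ^ (k - 1))

lemma hasDerivAt_laguerrePoly (n : ℕ) (ν x : ℝ) :
    HasDerivAt (laguerrePoly n ν) (laguerrePolyDeriv n ν x) x := by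
  exact HasDerivAt.fun_sum fun k (_ : k ∈ range (n + 1)) =>
    (hasDerivAt_pow k x).const_mul (laguerreCoeff n ν k)

lemma mul_laguerrePolyDeriv (n : ℕ) (ν x : ℝ) :
    x * laguerrePolyDeriv n ν x = ∑ k ∈ range (n + 1), k * laguerreCoeff n ν k * x ^ k := by
  rw [laguerrePolyDeriv, mul_sum]
  refine sum_congr rfl fun k _ => ?_
  rcases k with _ | k
  · simp
  · rw [Nat.add_sub_cancel, pow_succ]; ring

lemma laguerrePolyDeriv_eq_sum_shift (n : ℕ) (ν x : ℝ) :
    laguerrePolyDeriv n ν x = ∑ j ∈ range n, (j + 1) * laguerreCoeff n ν (j + 1) * x ^ j := by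
  rw [laguerrePolyDeriv, sum_range_succ']
  push_cast
  simp only [zero_mul, mul_zero, add_zero]
  exact sum_congr rfl fun j _ => by ring

section Derivatives

variable {ν : ℝ} (hν : -1 < ν)
include hν

lemma mul_laguerrePolyDeriv_succ (m : ℕ) (x : ℝ) :
    x * laguerrePolyDeriv (m + 1) ν x
      = ((m : ℝ) + 1) * laguerrePoly (m + 1) ν x - ((m : ℝ) + 1 + ν) * laguerrePoly m ν x := by
  have key : ∑ k ∈ range (m + 2), ((m : ℝ) + 1 - k) * laguerreCoeff (m + 1) ν k * x ^ k
      = ((m : ℝ) + 1 + ν) * laguerrePoly m ν x := by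
    rw [sum_range_succ, laguerrePoly_eq_sum, mul_sum]
    push_cast
    rw [sub_self, zero_mul, zero_mul, add_zero]
    refine sum_congr rfl fun k hk => ?_
    rw [laguerreCoeff_succ_of_le hν (mem_range_succ_iff.mp hk), mul_assoc]
  calc x * laguerrePolyDeriv (m + 1) ν x
      = ∑ k ∈ range (m + 2), (((m : ℝ) + 1) * (laguerreCoeff (m + 1) ν k * x ^ k)
          - ((m : ℝ) + 1 - k) * laguerreCoeff (m + 1) ν k * x ^ k) := by
        rw [mul_laguerrePolyDeriv]
        exact sum_congr rfl fun k _ => by ring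
    _ = _ := by rw [sum_sub_distrib, ← mul_sum, key]; rfl

lemma laguerrePolyDeriv_succ (m : ℕ) (x : ℝ) :
    laguerrePolyDeriv (m + 1) ν x = laguerrePolyDeriv m ν x - laguerrePoly m ν x := by
  have hsum : ∑ j ∈ range m, ((j : ℝ) + 1) * laguerreCoeff (m + 1) ν (j + 1) * x ^ j
      = ∑ j ∈ range m, (((j : ℝ) + 1) * laguerreCoeff m ν (j + 1) * x ^ j
          - laguerreCoeff m ν j * x ^ j) :=
    sum_congr rfl fun j hj => by rw [laguerreCoeff_succ_succ hν (mem_range.mp hj)]; ring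
  rw [laguerrePolyDeriv_eq_sum_shift, laguerrePolyDeriv_eq_sum_shift, laguerrePoly_eq_sum,
    sum_range_succ, sum_range_succ _ m, hsum, sum_sub_distrib, laguerreCoeff_succ_self hν]
  ring

lemma mul_laguerrePolyDeriv_eq (m : ℕ) (x : ℝ) :
    x * laguerrePolyDeriv m ν x
      = ((m : ℝ) + 1) * laguerrePoly (m + 1) ν x
        + (x - ((m : ℝ) + 1 + ν)) * laguerrePoly m ν x := by
  linear_combination mul_laguerrePolyDeriv_succ hν m x - x * laguerrePolyDeriv_succ hν m x

end Derivatives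

lemma hasDerivAt_mul_rpow_mul_exp {p : ℝ → ℝ} {p' t : ℝ} (a : ℝ) (hp : HasDerivAt p p' t)
    (ht : 0 < t) :
    HasDerivAt (fun s => p s * s ^ a * exp (-s / 2))
      ((t * p' + (a - t / 2) * p t) * t ^ a * exp (-t / 2) / t) t := by
  have h := (hp.fun_mul (hasDerivAt_rpow_const (p := a) (Or.inl ht.ne'))).fun_mul
    ((hasDerivAt_neg' t).div_const 2).exp
  refine h.congr_deriv ?_
  rw [rpow_sub_one ht.ne']
  field_simp
  ring

noncomputable def laguerreNorm (n : ℕ) (ν : ℝ) : ℝ :=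
  √(Gamma ((n : ℝ) + 1) / Gamma ((n : ℝ) + ν + 1))

lemma laguerreFun_eq (n : ℕ) (ν x : ℝ) :
    laguerreFun n ν x = laguerreNorm n ν * laguerrePoly n ν x * x ^ (ν / 2) * exp (-x / 2) := rfl

section Normalization

variable {ν : ℝ} (hν : -1 < ν)
include hν

lemma laguerreNorm_succ (m : ℕ) :
    laguerreNorm (m + 1) ν = √(((m : ℝ) + 1) / ((m : ℝ) + 1 + ν)) * laguerreNorm m ν := by
  have hs : 0 < (m : ℝ) + 1 + ν := by linarith [natCast_add_add_one_pos hν m]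
  have hs' := natCast_add_add_one_pos hν m
  have hΓ := Gamma_pos_of_pos hs'
  rw [laguerreNorm, laguerreNorm, ← sqrt_mul (by positivity), Gamma_natCast_succ_add hν,
    Gamma_nat_eq_factorial, Gamma_nat_eq_factorial, Nat.factorial_succ]
  push_cast
  congr 1
  field_simp
  ring

lemma sqrt_mul_laguerreNorm_succ (m : ℕ) :
    √(((m : ℝ) + 1) * ((m : ℝ) + 1 + ν)) * laguerreNorm (m + 1) ν
      = ((m : ℝ) + 1) * laguerreNorm m ν := by
  have hs : 0 < (m : ℝ) + 1 + ν := by linarith [natCast_add_add_one_pos hν m]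
  rw [laguerreNorm_succ hν, ← mul_assoc, ← sqrt_mul (by positivity),
    show ((m : ℝ) + 1) * ((m : ℝ) + 1 + ν) * (((m : ℝ) + 1) / ((m : ℝ) + 1 + ν))
      = ((m : ℝ) + 1) ^ 2 by field_simp, sqrt_sq (by positivity)]

lemma mul_laguerreNorm_succ (m : ℕ) :
    ((m : ℝ) + 1 + ν) * laguerreNorm (m + 1) ν
      = √(((m : ℝ) + 1) * ((m : ℝ) + 1 + ν)) * laguerreNorm m ν := by
  have hs : 0 < (m : ℝ) + 1 + ν := by linarith [natCast_add_add_one_pos hν m]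
  rw [laguerreNorm_succ hν, ← mul_assoc, ← sqrt_sq hs.le, ← sqrt_mul (by positivity),
    sqrt_sq hs.le]
  congr 2
  field_simp

end Normalization

section DifferentiationSystem

variable {ν : ℝ} (hν : -1 < ν)
include hν

theorem hasDerivAt_laguerreFun (m : ℕ) {t : ℝ} (ht : 0 < t) :
    HasDerivAt (laguerreFun m ν)
      (((t / 2 - ν / 2 - ((m : ℝ) + 1)) * laguerreFun m ν t
        + √(((m : ℝ) + 1) * ((m : ℝ) + 1 + ν)) * laguerreFun (m + 1) ν t) / t) t := by
  refine (hasDerivAt_mul_rpow_mul_exp (ν / 2)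
    ((hasDerivAt_laguerrePoly m ν t).const_mul (laguerreNorm m ν)) ht).congr_deriv ?_
  rw [laguerreFun_eq, laguerreFun_eq]
  linear_combination (t ^ (ν / 2) * exp (-t / 2) / t) *
    (laguerreNorm m ν * mul_laguerrePolyDeriv_eq hν m t
      - laguerrePoly (m + 1) ν t * sqrt_mul_laguerreNorm_succ hν m)

theorem hasDerivAt_laguerreFun_succ (m : ℕ) {t : ℝ} (ht : 0 < t) :
    HasDerivAt (laguerreFun (m + 1) ν)
      ((-√(((m : ℝ) + 1) * ((m : ℝ) + 1 + ν)) * laguerreFun m ν t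
        - (t / 2 - ν / 2 - ((m : ℝ) + 1)) * laguerreFun (m + 1) ν t) / t) t := by
  refine (hasDerivAt_mul_rpow_mul_exp (ν / 2)
    ((hasDerivAt_laguerrePoly (m + 1) ν t).const_mul (laguerreNorm (m + 1) ν)) ht).congr_deriv ?_
  rw [laguerreFun_eq, laguerreFun_eq]
  linear_combination (t ^ (ν / 2) * exp (-t / 2) / t) *
    (laguerreNorm (m + 1) ν * mul_laguerrePolyDeriv_succ hν m t
      - laguerrePoly m ν t * mul_laguerreNorm_succ hν m)

end DifferentiationSystem

theorem kernel_euler_identity_of_hasDerivAt {u v : ℝ → ℝ} {b c x y : ℝ}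
    (hu : ∀ t, 0 < t → HasDerivAt u (((t / 2 - c) * u t + b * v t) / t) t)
    (hv : ∀ t, 0 < t → HasDerivAt v ((-b * u t - (t / 2 - c) * v t) / t) t)
    (hx : 0 < x) (hy : 0 < y) (hxy : x ≠ y) :
    x * deriv (fun s => (u s * v y - u y * v s) / (s - y)) x
      + y * deriv (fun s => (u x * v s - u s * v x) / (x - s)) y
      + (u x * v y - u y * v x) / (x - y)
      = 1 / 2 * (u x * v y + u y * v x) := by
  have hxy' : x - y ≠ 0 := sub_ne_zero.mpr hxy
  have hΦx := (((hu x hx).mul_const (v y)).fun_sub ((hv x hx).const_mul (u y))).fun_div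
    ((hasDerivAt_id' x).sub_const y) hxy'
  have hΦy := (((hv y hy).const_mul (u x)).fun_sub ((hu y hy).mul_const (v x))).fun_div
    ((hasDerivAt_id' y).const_sub x) hxy'
  rw [hΦx.deriv, hΦy.deriv]
  field_simp
  ring

/-- with `Φ(x,y) = (L_{n-1}^ν(x)L_n^ν(y) - L_{n-1}^ν(y)L_n^ν(x))/(x-y)`,
one has `(x ∂ₓ + y ∂_y + 1)Φ(x,y) = (1/2)[L_{n-1}^ν(x)L_n^ν(y) + L_{n-1}^ν(y)L_n^ν(x)]`. -/
theorem stmt_6 (ν : ℝ) (hν : -1 < ν) (n : ℕ) (hn : 1 ≤ n) (x y : ℝ)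
    (hx : 0 < x) (hy : 0 < y) (hxy : x ≠ y) :
    x * deriv (fun s => (laguerreFun (n - 1) ν s * laguerreFun n ν y -
          laguerreFun (n - 1) ν y * laguerreFun n ν s) / (s - y)) x
      + y * deriv (fun s => (laguerreFun (n - 1) ν x * laguerreFun n ν s -
          laguerreFun (n - 1) ν s * laguerreFun n ν x) / (x - s)) y
      + (laguerreFun (n - 1) ν x * laguerreFun n ν y -
          laguerreFun (n - 1) ν y * laguerreFun n ν x) / (x - y)
      = (1 / 2) * (laguerreFun (n - 1) ν x * laguerreFun n ν y +
          laguerreFun (n - 1) ν y * laguerreFun n ν x) := by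
  obtain ⟨m, rfl⟩ := Nat.exists_eq_add_of_le' hn
  rw [Nat.add_sub_cancel]
  exact kernel_euler_identity_of_hasDerivAt (b := √(((m : ℝ) + 1) * ((m : ℝ) + 1 + ν)))
    (c := ν / 2 + ((m : ℝ) + 1))
    (fun t ht => (hasDerivAt_laguerreFun hν m ht).congr_deriv (by ring))
    (fun t ht => (hasDerivAt_laguerreFun_succ hν m ht).congr_deriv (by ring)) hx hy hxy
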